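/- Consider an N-player game where each f_i(·, x_{−i}) is ρ_i-weakly convex and each X_i ⊆ ℝ^{n_i} is nonempty, convex, and compact with diameter at most D. Fix 0 < η < min_i 1/ρ_i. Suppose each subdifferential ∂_{x_i} f_i(·, x_{−i}) is L_i-Lipschitz as a set-valued map, and x* is a QNE of the Moreau-smoothed game (⟨∇_{x_i} f^η_i(x*_i, x*_{−i}), x_i − x*_i⟩ ≥ 0 for all x_i ∈ X_i, all i), with ‖∇_{x_i} f^η_i(x*_i, x*_{−i})‖ ≤ M* for all i. Then x* is an (ηLDM*)-QNE of the original game: for each i and all x_i ∈ X_i, f_i'(x*_i, x*_{−i}; x_i − x*_i) ≥ −ηLDM*, where L = max_i L_i. -/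
import Mathlib


open Filter Topology Set
open scoped RealInnerProductSpace

/-- The weakly convex subdifferential `∂φ(z) = ∂(φ + (ρ/2)‖·‖²)(z) - ρz`. -/
def subdiffAt {E : Type*} [NormedAddCommGroup E] [InnerProductSpace ℝ E]
    (φ : E → ℝ) (ρ : ℝ) (z : E) : Set E :=
  {u | ∀ y, φ z + ρ / 2 * ‖z‖ ^ 2 + ⟪u + ρ • z, y - z⟫ ≤ φ y + ρ / 2 * ‖y‖ ^ 2}

set_option maxHeartbeats 1000000 in
/-- A QNE of the Moreau-smoothed weakly convex game is an `ηLDM*`-QNE of the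
original game: all directional derivatives into feasible directions are
bounded below by `-ηLDM*`. -/
theorem stmt16 {N : ℕ} (n : Fin N → ℕ)
    (f : ∀ _ : Fin N, (∀ j, EuclideanSpace ℝ (Fin (n j))) → ℝ)
    (ρ : Fin N → ℝ) (hρ : ∀ i, 0 < ρ i)
    (X : ∀ i, Set (EuclideanSpace ℝ (Fin (n i))))
    (hXne : ∀ i, (X i).Nonempty) (hXconv : ∀ i, Convex ℝ (X i))
    (hXcpt : ∀ i, IsCompact (X i))
    (D : ℝ) (hD : ∀ i, ∀ y ∈ X i, ∀ z ∈ X i, ‖y - z‖ ≤ D)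
    (η : ℝ) (hη : 0 < η) (hηρ : ∀ i, η * ρ i < 1)
    (hwc : ∀ i (x : ∀ j, EuclideanSpace ℝ (Fin (n j))),
      ConvexOn ℝ Set.univ (fun z => f i (Function.update x i z) + ρ i / 2 * ‖z‖ ^ 2))
    (L : ℝ) (hL : 0 ≤ L)
    (hLip : ∀ i (x : ∀ j, EuclideanSpace ℝ (Fin (n j))) (z₁ z₂ : EuclideanSpace ℝ (Fin (n i))),
      subdiffAt (fun z => f i (Function.update x i z)) (ρ i) z₁ ⊆
        {w | ∃ u ∈ subdiffAt (fun z => f i (Function.update x i z)) (ρ i) z₂,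
          ‖w - u‖ ≤ L * ‖z₁ - z₂‖})
    (P : ∀ i : Fin N, (∀ j, EuclideanSpace ℝ (Fin (n j))) → EuclideanSpace ℝ (Fin (n i)))
    (hP : ∀ i x, IsMinOn
      (fun y => f i (Function.update x i y) + ‖y - x i‖ ^ 2 / (2 * η)) Set.univ (P i x))
    (xstar : ∀ j, EuclideanSpace ℝ (Fin (n j))) (hxstar : ∀ i, xstar i ∈ X i)
    (hQNE : ∀ i, ∀ xi ∈ X i,
      (0 : ℝ) ≤ ⟪(1 / η) • (xstar i - P i xstar), xi - xstar i⟫)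
    (Mstar : ℝ) (hMstar : ∀ i, ‖(1 / η) • (xstar i - P i xstar)‖ ≤ Mstar) :
    ∀ i, ∀ xi ∈ X i, ∀ c : ℝ,
      Tendsto (fun t : ℝ =>
          (f i (Function.update xstar i (xstar i + t • (xi - xstar i))) - f i xstar) / t)
        (𝓝[>] (0 : ℝ)) (𝓝 c) →
      -(η * L * D * Mstar) ≤ c := by
  intro i xi hxi c hc
  have hρi := hρ i
  have expand : ∀ (a b : EuclideanSpace ℝ (Fin (n i))) (t : ℝ),
      ‖a + t • b‖ ^ 2 = ‖a‖ ^ 2 + 2 * (t * ⟪a, b⟫) + t ^ 2 * ‖b‖ ^ 2 := by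
    intro a b t
    rw [norm_add_sq_real, real_inner_smul_right, norm_smul, Real.norm_eq_abs, mul_pow, sq_abs]
  set κ : ℝ := (2 * η)⁻¹ with hκdef
  have hκ0 : 0 < κ := by positivity
  have hκη : 1 / η = 2 * κ := by rw [hκdef]; field_simp
  have hρκ : ρ i / 2 < κ := by
    have h2 : ρ i / 2 * (2 * η) < 1 := by nlinarith [hηρ i]
    have h3 : ρ i / 2 = ρ i / 2 * (2 * η) * κ := by rw [hκdef]; field_simp
    rw [h3]
    calc ρ i / 2 * (2 * η) * κ < 1 * κ := mul_lt_mul_of_pos_right h2 hκ0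
    _ = κ := one_mul κ
  have hdiv : ∀ r : ℝ, r / (2 * η) = κ * r := fun r => by rw [hκdef]; ring
  -- Step 1: the Moreau gradient is a subgradient at the prox point
  have hu : (1 / η) • (xstar i - P i xstar) ∈
      subdiffAt (fun z => f i (Function.update xstar i z)) (ρ i) (P i xstar) := by
    simp only [subdiffAt, Set.mem_setOf_eq]
    intro y
    refine le_of_forall_pos_le_add fun ε hε => ?_
    have hs0 : (0:ℝ) ≤ ‖y - P i xstar‖ ^ 2 := by positivity
    set C : ℝ := (κ - ρ i / 2) * ‖y - P i xstar‖ ^ 2 with hCdef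
    have hC0 : 0 ≤ C := mul_nonneg (by linarith) hs0
    set t : ℝ := min 1 (ε / (C + 1)) with htdef
    have ht0 : 0 < t := lt_min one_pos (div_pos hε (by linarith))
    have ht1 : t ≤ 1 := min_le_left _ _
    have htC : t * C ≤ ε := by
      have h1 : t ≤ ε / (C + 1) := min_le_right _ _
      have h2 : t * C ≤ ε / (C + 1) * C := mul_le_mul_of_nonneg_right h1 hC0
      have h3 : ε / (C + 1) * C ≤ ε := by
        rw [div_mul_eq_mul_div, div_le_iff₀ (by linarith : (0:ℝ) < C + 1)]
        nlinarith
      linarith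
    have hconv := (hwc i xstar).2 (mem_univ (P i xstar)) (mem_univ y)
      (by linarith : (0:ℝ) ≤ 1 - t) ht0.le (by ring : (1 - t) + t = 1)
    have hcv : (1 - t) • P i xstar + t • y = P i xstar + t • (y - P i xstar) := by module
    rw [hcv] at hconv
    simp only [smul_eq_mul] at hconv
    have hmin := isMinOn_iff.mp (hP i xstar) (P i xstar + t • (y - P i xstar)) (mem_univ _)
    simp only [hdiv] at hmin
    have e1 := expand (P i xstar) (y - P i xstar) t
    have e2 : ‖P i xstar + t • (y - P i xstar) - xstar i‖ ^ 2
        = ‖P i xstar - xstar i‖ ^ 2 + 2 * (t * ⟪P i xstar - xstar i, y - P i xstar⟫)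
          + t ^ 2 * ‖y - P i xstar‖ ^ 2 := by
      rw [show P i xstar + t • (y - P i xstar) - xstar i
          = (P i xstar - xstar i) + t • (y - P i xstar) by abel]
      exact expand _ _ t
    rw [e1] at hconv
    rw [e2] at hmin
    have einner : ⟪(1 / η) • (xstar i - P i xstar) + ρ i • P i xstar, y - P i xstar⟫
        = 2 * κ * (-⟪P i xstar - xstar i, y - P i xstar⟫)
          + ρ i * ⟪P i xstar, y - P i xstar⟫ := by
      rw [inner_add_left, real_inner_smul_left, real_inner_smul_left,
        show xstar i - P i xstar = -(P i xstar - xstar i) by abel, inner_neg_left, hκη]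
      try ring
    rw [einner]
    have key : t * (f i (Function.update xstar i (P i xstar)) + ρ i / 2 * ‖P i xstar‖ ^ 2
          + (2 * κ * (-⟪P i xstar - xstar i, y - P i xstar⟫)
             + ρ i * ⟪P i xstar, y - P i xstar⟫))
        ≤ t * ((f i (Function.update xstar i y) + ρ i / 2 * ‖y‖ ^ 2) + t * C) := by
      rw [hCdef]
      linarith [hconv, hmin]
    have key2 := le_of_mul_le_mul_left key ht0
    linarith
  -- Step 2: Lipschitz transfer of the subgradient to xstar i
  obtain ⟨v, hv, hvu⟩ := hLip i xstar (P i xstar) (xstar i) hu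
  have hM0 : 0 ≤ Mstar := le_trans (norm_nonneg _) (hMstar i)
  have hnu : ‖P i xstar - xstar i‖ = η * ‖(1 / η) • (xstar i - P i xstar)‖ := by
    rw [norm_smul, Real.norm_eq_abs, abs_of_pos (show (0:ℝ) < 1 / η by positivity),
      norm_sub_rev]
    field_simp
  have hub : ‖(1 / η) • (xstar i - P i xstar) - v‖ ≤ η * L * Mstar := by
    calc ‖(1 / η) • (xstar i - P i xstar) - v‖ ≤ L * ‖P i xstar - xstar i‖ := hvu
    _ = L * (η * ‖(1 / η) • (xstar i - P i xstar)‖) := by rw [hnu]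
    _ ≤ L * (η * Mstar) := by
        exact mul_le_mul_of_nonneg_left (mul_le_mul_of_nonneg_left (hMstar i) hη.le) hL
    _ = η * L * Mstar := by ring
  -- Step 3: lower bound on the directional derivative via v
  simp only [subdiffAt, Set.mem_setOf_eq] at hv
  have hquot : ∀ t : ℝ, 0 < t →
      ⟪v, xi - xstar i⟫ - ρ i / 2 * t * ‖xi - xstar i‖ ^ 2
        ≤ (f i (Function.update xstar i (xstar i + t • (xi - xstar i))) - f i xstar) / t := by
    intro t ht
    have hv' := hv (xstar i + t • (xi - xstar i))
    rw [show xstar i + t • (xi - xstar i) - xstar i = t • (xi - xstar i) by abel,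
      real_inner_smul_right, inner_add_left, real_inner_smul_left,
      expand (xstar i) (xi - xstar i) t] at hv'
    have hfx : f i (Function.update xstar i (xstar i)) = f i xstar := by
      rw [Function.update_eq_self]
    rw [hfx] at hv'
    rw [le_div_iff₀ ht]
    linarith [hv']
  have hlim : Tendsto (fun t : ℝ => ⟪v, xi - xstar i⟫ - ρ i / 2 * t * ‖xi - xstar i‖ ^ 2)
      (𝓝[>] (0:ℝ)) (𝓝 ⟪v, xi - xstar i⟫) := by
    have hct : Continuous fun t : ℝ =>
        ⟪v, xi - xstar i⟫ - ρ i / 2 * t * ‖xi - xstar i‖ ^ 2 := by fun_prop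
    have h0 := hct.tendsto 0
    simp only [mul_zero, zero_mul, sub_zero] at h0
    exact h0.mono_left nhdsWithin_le_nhds
  have h1 : ⟪v, xi - xstar i⟫ ≤ c := by
    refine le_of_tendsto_of_tendsto hlim hc ?_
    filter_upwards [self_mem_nhdsWithin] with t ht
    exact hquot t ht
  -- Step 4: conclude
  have hud : (0:ℝ) ≤ ⟪(1 / η) • (xstar i - P i xstar), xi - xstar i⟫ := hQNE i xi hxi
  have hcs : ⟪(1 / η) • (xstar i - P i xstar) - v, xi - xstar i⟫
      ≤ ‖(1 / η) • (xstar i - P i xstar) - v‖ * ‖xi - xstar i‖ := real_inner_le_norm _ _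
  have hsplit : ⟪(1 / η) • (xstar i - P i xstar) - v, xi - xstar i⟫
      = ⟪(1 / η) • (xstar i - P i xstar), xi - xstar i⟫ - ⟪v, xi - xstar i⟫ :=
    inner_sub_left _ _ _
  have hdD : ‖xi - xstar i‖ ≤ D := hD i xi hxi (xstar i) (hxstar i)
  have hprod : ‖(1 / η) • (xstar i - P i xstar) - v‖ * ‖xi - xstar i‖ ≤ η * L * Mstar * D :=
    mul_le_mul hub hdD (norm_nonneg _) (mul_nonneg (mul_nonneg hη.le hL) hM0)
  linarith
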